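/- Let F(x) ∈ F[x₁,…,x_n]^{r×r} be such that for every partition of the variables x = y ⊔ z there exist G ∈ F[y]^{r×r} and H ∈ F[z]^{r×r} with F = G·H (F is computed by a width-r commutative ROABP). Suppose that for every subset y of at most ⌊log₂ r²⌋ + 1 variables, the restriction map achieves support-⌊log₂ r²⌋ rank concentration at a generic shift g. Then F itself is support-⌊log₂ r²⌋ rank concentrated at g: every derivative ∂_{x^a}(F)(g) with |a|₀ > ⌊log₂ r²⌋ lies in the span of derivatives ∂_{x^{a'}}(F)(g) with |a'|₀ < |a|₀, and hence by induction in the span of derivatives of support ≤ ⌊log₂ r²⌋. -/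

import Mathlib

/-!
Let `L = ⌊log₂ r²⌋` and let `a` have support larger than `L`. Choose `S ⊆ supp a` with
`|S| = L + 1` and factor `M = G H` with `G` in the variables of `S` and `H` in the others.
Derivatives of such a product split: `∂_a M = ∂_{a|_S} G · ∂_{a|_{Sᶜ}} H`. By rank concentration
of `G`, the first factor is a combination of `∂_b G` with `|b|₀ ≤ L`, and multiplying back,
`∂_b G · ∂_{a|_{Sᶜ}} H = ∂_{b + a|_{Sᶜ}} M` has support at most `L + |a|₀ - |S| < |a|₀`.
Induction on the support then gives the span equality.
-/

/-- The Hasse derivative `∂_{x^a}(f)` evaluated at `α`: the coefficient of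
`x^a` in the shifted polynomial `f(x + α)`. -/
noncomputable def hasseAt {σ : Type*} {F : Type*} [CommSemiring F]
    (f : MvPolynomial σ F) (a : σ →₀ ℕ) (α : σ → F) : F :=
  MvPolynomial.coeff a
    (MvPolynomial.bind₁ (fun i => MvPolynomial.X i + MvPolynomial.C (α i)) f)

open MvPolynomial

section Hasse

variable {σ F : Type*} [CommSemiring F]

lemma vars_bind₁_X_add_C_subset (f : MvPolynomial σ F) (α : σ → F) :
    (bind₁ (fun i => X i + C (α i)) f).vars ⊆ f.vars := by
  classical
  intro j hj
  obtain ⟨i, hi, hji⟩ := mem_vars_bind₁ _ f hj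
  have hXC : (X i + C (α i) : MvPolynomial σ F).vars ⊆ {i} :=
    (vars_add_subset _ _).trans <| by
      rcases subsingleton_or_nontrivial F with hF | hF
      · simp [Subsingleton.elim (X i) (0 : MvPolynomial σ F), vars_C]
      · simp [vars_X, vars_C]
  rwa [Finset.mem_singleton.1 (hXC hji)]

lemma hasseAt_eq_zero_of_not_subset_vars {f : MvPolynomial σ F} {a : σ →₀ ℕ}
    (ha : ¬ a.support ⊆ f.vars) (α : σ → F) : hasseAt f a α = 0 := by
  by_contra h
  exact ha <| (support_subset_vars_of_mem_support (mem_support_iff.2 h)).trans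
    (vars_bind₁_X_add_C_subset f α)

lemma hasseAt_sum {ι : Type*} (s : Finset ι) (f : ι → MvPolynomial σ F) (a : σ →₀ ℕ)
    (α : σ → F) : hasseAt (∑ i ∈ s, f i) a α = ∑ i ∈ s, hasseAt (f i) a α := by
  simp only [hasseAt, map_sum, coeff_sum]

lemma hasseAt_mul [DecidableEq σ] (f h : MvPolynomial σ F) (a : σ →₀ ℕ) (α : σ → F) :
    hasseAt (f * h) a α =
      ∑ p ∈ Finset.HasAntidiagonal.antidiagonal a, hasseAt f p.1 α * hasseAt h p.2 α := by
  simp only [hasseAt, map_mul, coeff_mul]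

lemma Finsupp.eq_of_add_eq_add_of_support {S : Finset σ} {b c b' c' : σ →₀ ℕ}
    (hb : b.support ⊆ S) (hc : Disjoint c.support S) (hb' : b'.support ⊆ S)
    (hc' : Disjoint c'.support S) (h : b + c = b' + c') : b = b' ∧ c = c' := by
  have hbb' : b = b' := by
    ext i
    have hi := DFunLike.congr_fun h i
    by_cases hiS : i ∈ S
    · have hci : c i = 0 := Finsupp.notMem_support_iff.1 fun h => Finset.disjoint_left.1 hc h hiS
      have hci' : c' i = 0 :=
        Finsupp.notMem_support_iff.1 fun h => Finset.disjoint_left.1 hc' h hiS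
      simpa [hci, hci'] using hi
    · rw [Finsupp.notMem_support_iff.1 (mt (@hb i) hiS),
        Finsupp.notMem_support_iff.1 (mt (@hb' i) hiS)]
  exact ⟨hbb', add_left_cancel (hbb' ▸ h)⟩

lemma hasseAt_mul_add_of_disjoint {S : Finset σ} {f h : MvPolynomial σ F}
    (hf : f.vars ⊆ S) (hh : Disjoint h.vars S) {b c : σ →₀ ℕ} (hb : b.support ⊆ S)
    (hc : Disjoint c.support S) (α : σ → F) :
    hasseAt (f * h) (b + c) α = hasseAt f b α * hasseAt h c α := by
  classical
  rw [hasseAt_mul]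
  refine Finset.sum_eq_single (b, c) ?_ fun hbc => ?_
  · rintro ⟨p, q⟩ hpq hne
    by_cases hp : p.support ⊆ f.vars
    · by_cases hq : q.support ⊆ h.vars
      · obtain ⟨rfl, rfl⟩ := Finsupp.eq_of_add_eq_add_of_support (hp.trans hf)
          (hh.mono_left hq) hb hc (Finset.HasAntidiagonal.mem_antidiagonal.1 hpq)
        exact (hne rfl).elim
      · rw [hasseAt_eq_zero_of_not_subset_vars hq, mul_zero]
    · rw [hasseAt_eq_zero_of_not_subset_vars hp, zero_mul]
  · exact (hbc (Finset.HasAntidiagonal.mem_antidiagonal.2 (by rfl))).elim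

end Hasse

theorem Submodule.span_setOf_weight_le_eq_span {R M ι : Type*} [Semiring R] [AddCommMonoid M]
    [Module R M] (D : ι → M) (w : ι → ℕ) (L : ℕ)
    (h : ∀ i, L < w i → D i ∈ span R {x | ∃ j, w j < w i ∧ x = D j}) :
    span R {x | ∃ i, w i ≤ L ∧ x = D i} = span R {x | ∃ i, x = D i} := by
  refine le_antisymm (span_mono fun x ⟨i, _, hx⟩ => ⟨i, hx⟩) (span_le.2 ?_)
  rintro _ ⟨i, rfl⟩
  induction hk : w i using Nat.strong_induction_on generalizing i with
  | _ k ih =>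
    by_cases hi : w i ≤ L
    · exact subset_span ⟨i, hi, rfl⟩
    · refine span_le.2 ?_ (h i (by omega))
      rintro _ ⟨j, hj, rfl⟩
      exact ih (w j) (hk ▸ hj) j rfl

section HasseMatrix

variable {σ F l m o : Type*} [CommSemiring F]

noncomputable def hasseMatrix (M : Matrix l m (MvPolynomial σ F)) (a : σ →₀ ℕ) (α : σ → F) :
    Matrix l m F :=
  Matrix.of fun u v => hasseAt (M u v) a α

lemma hasseMatrix_eq_zero_of_not_subset {S : Finset σ} {G : Matrix l m (MvPolynomial σ F)}
    (hG : ∀ u v, (G u v).vars ⊆ S) {b : σ →₀ ℕ} (hb : ¬ b.support ⊆ S) (α : σ → F) :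
    hasseMatrix G b α = 0 := by
  ext u v
  exact hasseAt_eq_zero_of_not_subset_vars (fun h => hb (h.trans (hG u v))) α

variable [Fintype m]

lemma hasseMatrix_mul_add_of_disjoint {S : Finset σ} {G : Matrix l m (MvPolynomial σ F)}
    {H : Matrix m o (MvPolynomial σ F)} (hG : ∀ u v, (G u v).vars ⊆ S)
    (hH : ∀ u v, Disjoint (H u v).vars S) {b c : σ →₀ ℕ} (hb : b.support ⊆ S)
    (hc : Disjoint c.support S) (α : σ → F) :
    hasseMatrix (G * H) (b + c) α = hasseMatrix G b α * hasseMatrix H c α := by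
  ext u v
  simp only [hasseMatrix, Matrix.mul_apply, Matrix.of_apply, hasseAt_sum]
  exact Finset.sum_congr rfl fun w _ => hasseAt_mul_add_of_disjoint (hG u w) (hH w v) hb hc α

lemma hasseMatrix_mul_mem_span_support_lt {S : Finset σ} {G : Matrix l m (MvPolynomial σ F)}
    {H : Matrix m o (MvPolynomial σ F)} (hG : ∀ u v, (G u v).vars ⊆ S)
    (hH : ∀ u v, Disjoint (H u v).vars S) {L : ℕ} {α : σ → F}
    (hconc : Submodule.span F {D | ∃ b : σ →₀ ℕ, b.support.card ≤ L ∧ D = hasseMatrix G b α}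
      = Submodule.span F {D | ∃ b : σ →₀ ℕ, D = hasseMatrix G b α})
    {a : σ →₀ ℕ} (hSa : S ⊆ a.support) (hLS : L < S.card) :
    hasseMatrix (G * H) a α ∈ Submodule.span F
      {D | ∃ a' : σ →₀ ℕ, a'.support.card < a.support.card ∧ D = hasseMatrix (G * H) a' α} := by
  classical
  set c := a.filter (· ∉ S)
  have hc : Disjoint c.support S :=
    Finset.disjoint_left.2 fun i hi => (Finset.mem_filter.1 hi).2
  have hcard : c.support.card + S.card = a.support.card := by
    rw [Finsupp.support_filter, ← Finset.sdiff_eq_filter, Finset.card_sdiff_add_card_eq_card hSa]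
  set ψ := mulRightLinearMap l F (hasseMatrix H c α)
  have hsplit : hasseMatrix (G * H) a α = ψ (hasseMatrix G (a.filter (· ∈ S)) α) := by
    conv_lhs => rw [← Finsupp.filter_add_filter_not a (· ∈ S)]
    exact hasseMatrix_mul_add_of_disjoint hG hH
      (fun i hi => by simp only [Finsupp.support_filter, Finset.mem_filter] at hi; exact hi.2)
      hc α
  have hmem : hasseMatrix G (a.filter (· ∈ S)) α ∈
      Submodule.span F {D | ∃ b : σ →₀ ℕ, b.support.card ≤ L ∧ D = hasseMatrix G b α} :=
    hconc ▸ Submodule.subset_span ⟨_, rfl⟩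
  rw [hsplit, ← Submodule.mem_comap]
  refine Submodule.span_le.2 ?_ hmem
  rintro _ ⟨b, hb, rfl⟩
  by_cases hbS : b.support ⊆ S
  · have hψ : ψ (hasseMatrix G b α) = hasseMatrix (G * H) (b + c) α :=
      (hasseMatrix_mul_add_of_disjoint hG hH hbS hc α).symm
    refine Submodule.mem_comap.2 (hψ ▸ Submodule.subset_span ⟨b + c, ?_, rfl⟩)
    calc (b + c).support.card ≤ b.support.card + c.support.card :=
          (Finset.card_le_card Finsupp.support_add).trans (Finset.card_union_le _ _)
      _ < a.support.card := by omega
  · simp [hasseMatrix_eq_zero_of_not_subset hG hbS]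

end HasseMatrix

/-- Let `M ∈ 𝔽[x]^{r×r}` be computed by a width-`r` commutative
ROABP: for every partition of the variables into `S ⊔ Sᶜ` there is a
factorization `M = G·H` with `G` using only the variables of `S` and `H` only
those of `Sᶜ`.  Suppose moreover that whenever `|S| ≤ ⌊log₂ r²⌋ + 1` the
factor `G` is support-`⌊log₂ r²⌋` rank concentrated at the shift `g`.  Then
`M` itself is support-`⌊log₂ r²⌋` rank concentrated at `g`: every derivative
of support `> ⌊log₂ r²⌋` lies in the span of derivatives of strictly smaller
support, and the span of the derivatives of support `≤ ⌊log₂ r²⌋` equals the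
span of all derivatives. -/
theorem stmt_19 {𝔽 : Type*} [Field 𝔽] {n r : ℕ}
    (M : Matrix (Fin r) (Fin r) (MvPolynomial (Fin n) 𝔽))
    (g : Fin n → 𝔽)
    (hfac : ∀ S : Finset (Fin n),
      ∃ G H : Matrix (Fin r) (Fin r) (MvPolynomial (Fin n) 𝔽),
        (∀ u v, (G u v).vars ⊆ S) ∧ (∀ u v, (H u v).vars ⊆ Sᶜ) ∧
        M = G * H ∧
        (S.card ≤ Nat.log 2 (r * r) + 1 →
          Submodule.span 𝔽
              {D : Matrix (Fin r) (Fin r) 𝔽 | ∃ a : Fin n →₀ ℕ,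
                a.support.card ≤ Nat.log 2 (r * r) ∧
                D = Matrix.of fun u v => hasseAt (G u v) a g}
            = Submodule.span 𝔽
              {D : Matrix (Fin r) (Fin r) 𝔽 | ∃ a : Fin n →₀ ℕ,
                D = Matrix.of fun u v => hasseAt (G u v) a g})) :
    (∀ a : Fin n →₀ ℕ, Nat.log 2 (r * r) < a.support.card →
      (Matrix.of fun u v => hasseAt (M u v) a g) ∈
        Submodule.span 𝔽
          {D : Matrix (Fin r) (Fin r) 𝔽 | ∃ a' : Fin n →₀ ℕ,
            a'.support.card < a.support.card ∧
            D = Matrix.of fun u v => hasseAt (M u v) a' g}) ∧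
    Submodule.span 𝔽
        {D : Matrix (Fin r) (Fin r) 𝔽 | ∃ a : Fin n →₀ ℕ,
          a.support.card ≤ Nat.log 2 (r * r) ∧
          D = Matrix.of fun u v => hasseAt (M u v) a g}
      = Submodule.span 𝔽
        {D : Matrix (Fin r) (Fin r) 𝔽 | ∃ a : Fin n →₀ ℕ,
          D = Matrix.of fun u v => hasseAt (M u v) a g} := by
  have hstep : ∀ a : Fin n →₀ ℕ, Nat.log 2 (r * r) < a.support.card →
      hasseMatrix M a g ∈ Submodule.span 𝔽
        {D | ∃ a' : Fin n →₀ ℕ, a'.support.card < a.support.card ∧ D = hasseMatrix M a' g} := by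
    intro a ha
    obtain ⟨S, hSa, hS⟩ := Finset.exists_subset_card_eq (Nat.succ_le_of_lt ha)
    obtain ⟨G, H, hG, hH, rfl, hconc⟩ := hfac S
    exact hasseMatrix_mul_mem_span_support_lt hG
      (fun u v => Finset.subset_compl_iff_disjoint_right.1 (hH u v)) (hconc hS.le) hSa (by omega)
  exact ⟨hstep, Submodule.span_setOf_weight_le_eq_span (fun a => hasseMatrix M a g)
    (fun a => a.support.card) _ hstep⟩
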